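/- Let A > 1 and let B be a subset of Q := [0,∞)². If B contains no (A+1)-subgeometric sequence (i.e. every sequence of points of B fails to be (A+1)-subgeometric), then B is A-small. -/
import Mathlib


open Complex MeasureTheory NumberField IsDedekindDomain

/-- The closed positive quadrant `[0,∞)² ⊆ ℝ²`. -/
def Qset : Set (ℝ × ℝ) := {p | 0 ≤ p.1 ∧ 0 ≤ p.2}

/-- The norm `‖(x,y)‖ = x + y` on the quadrant. -/
def qnorm (p : ℝ × ℝ) : ℝ := p.1 + p.2

/-- The distance induced by the norm `‖(x,y)‖ = x + y`. -/
def dist₁ (p q : ℝ × ℝ) : ℝ := |p.1 - q.1| + |p.2 - q.2|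

/-- `m_U = inf {‖u‖ : u ∈ U}`. -/
noncomputable def mInf (U : Set (ℝ × ℝ)) : ℝ := sInf (qnorm '' U)

/-- A sequence of nonempty subsets is disjointly unbounded if each term is disjoint from the
union of the previous ones and `m_{U_k} → ∞`. -/
def DisjointlyUnbounded (U : ℕ → Set (ℝ × ℝ)) : Prop :=
  (∀ k, (U k).Nonempty) ∧ (∀ k : ℕ, ∀ i ≤ k, U (k + 1) ∩ U i = ∅) ∧
    Filter.Tendsto (fun k => mInf (U k)) Filter.atTop Filter.atTop

/-- A sequence of subsets is `A`-bounded if `diam (U_{k+1} ∪ U_k) ≤ A m_{U_k}` for all `k`. -/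
def ABounded (A : ℝ) (U : ℕ → Set (ℝ × ℝ)) : Prop :=
  ∀ k : ℕ, ∀ p ∈ U (k + 1) ∪ U k, ∀ q ∈ U (k + 1) ∪ U k, dist₁ p q ≤ A * mInf (U k)

/-- A subset `B` of the quadrant is `A`-small if every disjointly unbounded `A`-bounded
sequence of nonempty subsets of the quadrant has some term disjoint from `B`. -/
def ASmall (A : ℝ) (B : Set (ℝ × ℝ)) : Prop :=
  ∀ U : ℕ → Set (ℝ × ℝ), (∀ k, U k ⊆ Qset) → DisjointlyUnbounded U → ABounded A U →
    ∃ k, U k ∩ B = ∅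

/-- A sequence of points is `A`-subgeometric if `‖x_k‖ → ∞` and eventually
`‖x_{k+1}‖ ≤ A ‖x_k‖`. -/
def Subgeometric (A : ℝ) (x : ℕ → ℝ × ℝ) : Prop :=
  Filter.Tendsto (fun k => qnorm (x k)) Filter.atTop Filter.atTop ∧
    ∀ᶠ k in Filter.atTop, qnorm (x (k + 1)) ≤ A * qnorm (x k)

/-- A subset of the quadrant containing no `(A+1)`-subgeometric sequence is `A`-small. -/
theorem stmt_14 (A : ℝ) (hA : 1 < A) (B : Set (ℝ × ℝ)) (hB : B ⊆ Qset)
    (h : ¬ ∃ x : ℕ → ℝ × ℝ, (∀ k, x k ∈ B) ∧ Subgeometric (A + 1) x) :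
    ASmall A B := by
  intro U hUQ hDU hAB
  by_contra hcon
  push_neg at hcon
  apply h
  choose x hx using hcon
  have hbdd : ∀ k, BddBelow (qnorm '' U k) := by
    intro k
    refine ⟨0, ?_⟩
    rintro y ⟨p, hp, rfl⟩
    exact add_nonneg (hUQ k hp).1 (hUQ k hp).2
  have hle : ∀ k, mInf (U k) ≤ qnorm (x k) := fun k =>
    csInf_le (hbdd k) ⟨x k, (hx k).1, rfl⟩
  refine ⟨x, fun k => (hx k).2, ?_, ?_⟩
  · exact Filter.tendsto_atTop_mono hle hDU.2.2
  · refine Filter.Eventually.of_forall fun k => ?_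
    have hd : dist₁ (x (k + 1)) (x k) ≤ A * mInf (U k) :=
      hAB k _ (Or.inl (hx (k + 1)).1) _ (Or.inr (hx k).1)
    have htri : qnorm (x (k + 1)) ≤ qnorm (x k) + dist₁ (x (k + 1)) (x k) := by
      unfold qnorm dist₁
      have h1 : (x (k+1)).1 ≤ (x k).1 + |(x (k+1)).1 - (x k).1| := by
        have := le_abs_self ((x (k+1)).1 - (x k).1); linarith
      have h2 : (x (k+1)).2 ≤ (x k).2 + |(x (k+1)).2 - (x k).2| := by
        have := le_abs_self ((x (k+1)).2 - (x k).2); linarith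
      linarith
    have hmul : A * mInf (U k) ≤ A * qnorm (x k) :=
      mul_le_mul_of_nonneg_left (hle k) (by linarith)
    calc qnorm (x (k + 1)) ≤ qnorm (x k) + dist₁ (x (k + 1)) (x k) := htri
      _ ≤ qnorm (x k) + A * qnorm (x k) := by linarith
      _ = (A + 1) * qnorm (x k) := by ring
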